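/- Let ν be a σ-finite measure on (Ω,𝒜), P_1,…,P_K probability measures equivalent to ν with densities f_k = dP_k/dν, weights π_k ∈ [0,1] with Σ_k π_k = 1, Z := ∫ Π_k f_k^{π_k} dν ∈ (0,∞), and G the probability measure with dG/dν = Π_k f_k^{π_k}/Z. Then for every probability measure Q ≪ ν with KL(Q‖ν) < ∞ and log f_k ∈ L¹(Q) for all k, one has Σ_k π_k · KL(Q‖P_k) ≥ −log Z, with equality if and only if Q = G. In particular G is the unique minimiser of Q ↦ Σ_k π_k KL(Q‖P_k) over such Q, and the minimum value is −log Z. -/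

import Mathlib

/-!
Writing `g = ∏ k, f k ^ π k`, so that `G = ν.withDensity (g / Z)`, the chain rule for
Radon–Nikodym derivatives gives `log dQ/dP_k = log dQ/dν - log f_k` and
`log dQ/dG = log dQ/dν - ∑ k, π_k log f_k + log Z`, `Q`-a.e. Integrating and using
`∑ k, π_k = 1` yields the identity `∑ k, π_k KL(Q‖P_k) = KL(Q‖G) - log Z`, so the theorem is
Gibbs' inequality `KL(Q‖G) ≥ 0`, with equality iff `Q = G`.
-/

open MeasureTheory
open scoped ENNReal

/-- Kullback–Leibler divergence `KL(Q‖P) = ∫ log(dQ/dP) dQ`. -/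
noncomputable def klDiv {Ω : Type*} [MeasurableSpace Ω] (Q P : Measure Ω) : ℝ :=
  ∫ ω, Real.log ((Q.rnDeriv P) ω).toReal ∂Q

section KLDivergence

variable {Ω : Type*} [MeasurableSpace Ω]

theorem klDiv_eq_integral_llr (Q P : Measure Ω) : klDiv Q P = ∫ ω, llr Q P ω ∂Q := rfl

theorem klDiv_eq_toReal_klDiv {Q P : Measure Ω} [IsProbabilityMeasure Q] [IsProbabilityMeasure P]
    (hQP : Q ≪ P) : klDiv Q P = (InformationTheory.klDiv Q P).toReal :=
  (InformationTheory.toReal_klDiv_of_measure_eq hQP (by simp)).symm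

theorem klDiv_nonneg {Q P : Measure Ω} [IsProbabilityMeasure Q] [IsProbabilityMeasure P]
    (hQP : Q ≪ P) : 0 ≤ klDiv Q P :=
  klDiv_eq_toReal_klDiv hQP ▸ ENNReal.toReal_nonneg

theorem klDiv_eq_zero_iff {Q P : Measure Ω} [IsProbabilityMeasure Q] [IsProbabilityMeasure P]
    (hQP : Q ≪ P) (hint : Integrable (llr Q P) Q) : klDiv Q P = 0 ↔ Q = P := by
  rw [klDiv_eq_toReal_klDiv hQP, ENNReal.toReal_eq_zero_iff,
    or_iff_left (InformationTheory.klDiv_ne_top hQP hint), InformationTheory.klDiv_eq_zero_iff]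

end KLDivergence

section WithDensity

variable {Ω : Type*} [MeasurableSpace Ω] {ν : Measure Ω} {f : Ω → ℝ≥0∞}

theorem ae_ne_zero_of_absolutelyContinuous_withDensity (hf : Measurable f)
    (hν : ν ≪ ν.withDensity f) : ∀ᵐ ω ∂ν, f ω ≠ 0 :=
  hν.ae_le ((ae_withDensity_iff hf).2 (ae_of_all _ fun _ => id))

theorem ae_ne_top_of_isFiniteMeasure_withDensity [IsFiniteMeasure (ν.withDensity f)]
    (hf : Measurable f) : ∀ᵐ ω ∂ν, f ω ≠ ∞ := by
  have hfin : ∫⁻ ω, f ω ∂ν ≠ ∞ := by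
    simpa using measure_ne_top (ν.withDensity f) Set.univ
  filter_upwards [ae_lt_top hf hfin] with ω hω using hω.ne

theorem ae_ne_zero_ne_top_of_equivalent_withDensity {P : Measure Ω} [IsFiniteMeasure P]
    (hf : Measurable f) (hP : P = ν.withDensity f) (hνP : ν ≪ P) :
    ∀ᵐ ω ∂ν, f ω ≠ 0 ∧ f ω ≠ ∞ := by
  subst hP
  filter_upwards [ae_ne_zero_of_absolutelyContinuous_withDensity hf hνP,
    ae_ne_top_of_isFiniteMeasure_withDensity hf] with ω h0 htop using ⟨h0, htop⟩

theorem llr_withDensity_right (Q ν : Measure Ω) [SigmaFinite Q] [SigmaFinite ν] (hQν : Q ≪ ν)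
    (hf : AEMeasurable f ν) (hf_ne_zero : ∀ᵐ ω ∂ν, f ω ≠ 0) (hf_ne_top : ∀ᵐ ω ∂ν, f ω ≠ ∞) :
    llr Q (ν.withDensity f) =ᵐ[Q] fun ω => llr Q ν ω - Real.log (f ω).toReal := by
  filter_upwards [hQν.ae_le (Measure.rnDeriv_withDensity_right Q ν hf hf_ne_zero hf_ne_top),
    hQν.ae_le hf_ne_zero, hQν.ae_le hf_ne_top, Q.rnDeriv_pos hQν,
    hQν.ae_le (Q.rnDeriv_ne_top ν)] with ω hρ hf0 hftop hd0 hdtop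
  rw [llr, llr, hρ, ENNReal.toReal_mul, ENNReal.toReal_inv,
    Real.log_mul (inv_ne_zero (ENNReal.toReal_pos hf0 hftop).ne')
      (ENNReal.toReal_pos hd0.ne' hdtop).ne', Real.log_inv]
  ring

theorem integrable_llr_withDensity_right (Q ν : Measure Ω) [SigmaFinite Q] [SigmaFinite ν]
    (hQν : Q ≪ ν) (hf : AEMeasurable f ν) (hf_ne_zero : ∀ᵐ ω ∂ν, f ω ≠ 0)
    (hf_ne_top : ∀ᵐ ω ∂ν, f ω ≠ ∞) (hQν_int : Integrable (llr Q ν) Q)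
    (hf_int : Integrable (fun ω => Real.log (f ω).toReal) Q) :
    Integrable (llr Q (ν.withDensity f)) Q :=
  (hQν_int.sub hf_int).congr (llr_withDensity_right Q ν hQν hf hf_ne_zero hf_ne_top).symm

theorem klDiv_withDensity_right (Q ν : Measure Ω) [SigmaFinite Q] [SigmaFinite ν]
    (hQν : Q ≪ ν) (hf : AEMeasurable f ν) (hf_ne_zero : ∀ᵐ ω ∂ν, f ω ≠ 0)
    (hf_ne_top : ∀ᵐ ω ∂ν, f ω ≠ ∞) (hQν_int : Integrable (llr Q ν) Q)
    (hf_int : Integrable (fun ω => Real.log (f ω).toReal) Q) :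
    klDiv Q (ν.withDensity f) = klDiv Q ν - ∫ ω, Real.log (f ω).toReal ∂Q := by
  rw [klDiv_eq_integral_llr, integral_congr_ae (llr_withDensity_right Q ν hQν hf hf_ne_zero
    hf_ne_top), integral_sub hQν_int hf_int, klDiv_eq_integral_llr]

end WithDensity

section GeometricMean

variable {ι : Type*} (s : Finset ι) {a : ι → ℝ≥0∞} (w : ι → ℝ) {c : ℝ≥0∞}

theorem prod_rpow_ne_zero (ha : ∀ i ∈ s, a i ≠ 0 ∧ a i ≠ ∞) : ∏ i ∈ s, a i ^ w i ≠ 0 :=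
  Finset.prod_ne_zero_iff.2 fun i hi =>
    (ENNReal.rpow_pos (pos_iff_ne_zero.2 (ha i hi).1) (ha i hi).2).ne'

theorem prod_rpow_ne_top (ha : ∀ i ∈ s, a i ≠ 0 ∧ a i ≠ ∞) : ∏ i ∈ s, a i ^ w i ≠ ∞ :=
  ENNReal.prod_ne_top fun i hi => ENNReal.rpow_ne_top_of_ne_zero (ha i hi).1 (ha i hi).2

theorem prod_rpow_div_ne_zero_ne_top (ha : ∀ i ∈ s, a i ≠ 0 ∧ a i ≠ ∞) (hc : c ≠ 0)
    (hc' : c ≠ ∞) : (∏ i ∈ s, a i ^ w i) / c ≠ 0 ∧ (∏ i ∈ s, a i ^ w i) / c ≠ ∞ :=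
  ⟨ENNReal.div_ne_zero.2 ⟨prod_rpow_ne_zero s w ha, hc'⟩,
    ENNReal.div_ne_top (prod_rpow_ne_top s w ha) hc⟩

theorem log_toReal_prod_rpow (ha : ∀ i ∈ s, a i ≠ 0 ∧ a i ≠ ∞) :
    Real.log (∏ i ∈ s, a i ^ w i).toReal = ∑ i ∈ s, w i * Real.log (a i).toReal := by
  have hpos : ∀ i ∈ s, 0 < (a i).toReal := fun i hi => ENNReal.toReal_pos (ha i hi).1 (ha i hi).2
  simp_rw [ENNReal.toReal_prod, ← ENNReal.toReal_rpow]
  rw [Real.log_prod fun i hi => (Real.rpow_pos_of_pos (hpos i hi) _).ne']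
  exact Finset.sum_congr rfl fun i hi => Real.log_rpow (hpos i hi) _

theorem log_toReal_prod_rpow_div (ha : ∀ i ∈ s, a i ≠ 0 ∧ a i ≠ ∞) (hc : c ≠ 0) (hc' : c ≠ ∞) :
    Real.log ((∏ i ∈ s, a i ^ w i) / c).toReal
      = ∑ i ∈ s, w i * Real.log (a i).toReal - Real.log c.toReal := by
  rw [ENNReal.toReal_div, Real.log_div (ENNReal.toReal_pos (prod_rpow_ne_zero s w ha)
    (prod_rpow_ne_top s w ha)).ne' (ENNReal.toReal_pos hc hc').ne', log_toReal_prod_rpow s w ha]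

end GeometricMean

section LogGeometricMean

variable {Ω ι : Type*} [MeasurableSpace Ω] [Fintype ι] {Q : Measure Ω} {f : ι → Ω → ℝ≥0∞}
  (w : ι → ℝ) {c : ℝ≥0∞}

theorem log_toReal_prod_rpow_div_ae_eq (hf : ∀ᵐ ω ∂Q, ∀ i, f i ω ≠ 0 ∧ f i ω ≠ ∞) (hc : c ≠ 0)
    (hc' : c ≠ ∞) : (fun ω => Real.log ((∏ i, f i ω ^ w i) / c).toReal) =ᵐ[Q]
      fun ω => ∑ i, w i * Real.log (f i ω).toReal - Real.log c.toReal := by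
  filter_upwards [hf] with ω hω using log_toReal_prod_rpow_div _ w (fun i _ => hω i) hc hc'

theorem integrable_log_toReal_prod_rpow_div [IsFiniteMeasure Q]
    (hf : ∀ᵐ ω ∂Q, ∀ i, f i ω ≠ 0 ∧ f i ω ≠ ∞) (hc : c ≠ 0) (hc' : c ≠ ∞)
    (hlogf : ∀ i, Integrable (fun ω => Real.log (f i ω).toReal) Q) :
    Integrable (fun ω => Real.log ((∏ i, f i ω ^ w i) / c).toReal) Q :=
  ((integrable_finsetSum _ fun i _ => (hlogf i).const_mul (w i)).sub (integrable_const _)).congr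
    (log_toReal_prod_rpow_div_ae_eq w hf hc hc').symm

theorem integral_log_toReal_prod_rpow_div [IsProbabilityMeasure Q]
    (hf : ∀ᵐ ω ∂Q, ∀ i, f i ω ≠ 0 ∧ f i ω ≠ ∞) (hc : c ≠ 0) (hc' : c ≠ ∞)
    (hlogf : ∀ i, Integrable (fun ω => Real.log (f i ω).toReal) Q) :
    ∫ ω, Real.log ((∏ i, f i ω ^ w i) / c).toReal ∂Q
      = ∑ i, w i * ∫ ω, Real.log (f i ω).toReal ∂Q - Real.log c.toReal := by
  have hint : ∀ i, Integrable (fun ω => w i * Real.log (f i ω).toReal) Q := fun i =>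
    (hlogf i).const_mul (w i)
  rw [integral_congr_ae (log_toReal_prod_rpow_div_ae_eq w hf hc hc'),
    integral_sub (integrable_finsetSum _ fun i _ => hint i) (integrable_const _),
    integral_finsetSum _ fun i _ => hint i, integral_const, probReal_univ, one_smul]
  simp_rw [integral_const_mul]

end LogGeometricMean

theorem stmt2_general {Ω : Type*} [MeasurableSpace Ω] (ν : Measure Ω) [SigmaFinite ν]
    (K : ℕ) (P : Fin K → Measure Ω) [∀ k, IsProbabilityMeasure (P k)]
    (f : Fin K → Ω → ℝ≥0∞) (hf : ∀ k, Measurable (f k))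
    (hPf : ∀ k, P k = ν.withDensity (f k))
    (hequiv : ∀ k, P k ≪ ν ∧ ν ≪ P k)
    (π : Fin K → ℝ) (hπsum : ∑ k, π k = 1)
    (Z : ℝ≥0∞) (hZpos : 0 < Z) (hZfin : Z < ⊤)
    (G : Measure Ω) [IsProbabilityMeasure G]
    (hG : G = ν.withDensity fun ω => (∏ k, f k ω ^ π k) / Z)
    (Q : Measure Ω) [IsProbabilityMeasure Q] (hQν : Q ≪ ν)
    (hKLfin : Integrable (fun ω => Real.log ((Q.rnDeriv ν) ω).toReal) Q)
    (hlogf : ∀ k, Integrable (fun ω => Real.log (f k ω).toReal) Q) :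
    -Real.log Z.toReal ≤ ∑ k, π k * klDiv Q (P k) ∧
      (∑ k, π k * klDiv Q (P k) = -Real.log Z.toReal ↔ Q = G) := by
  have hfae : ∀ᵐ ω ∂ν, ∀ k, f k ω ≠ 0 ∧ f k ω ≠ ∞ := ae_all_iff.2 fun k =>
    ae_ne_zero_ne_top_of_equivalent_withDensity (hf k) (hPf k) (hequiv k).2
  set g : Ω → ℝ≥0∞ := fun ω => (∏ k, f k ω ^ π k) / Z
  have hg : Measurable g := (Finset.measurable_prod _ fun k _ => (hf k).pow_const _).div_const _
  have hgae : ∀ᵐ ω ∂ν, g ω ≠ 0 ∧ g ω ≠ ∞ := hfae.mono fun ω hω =>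
    prod_rpow_div_ne_zero_ne_top _ π (fun k _ => hω k) hZpos.ne' hZfin.ne
  have hfae_Q : ∀ᵐ ω ∂Q, ∀ k, f k ω ≠ 0 ∧ f k ω ≠ ∞ := hQν.ae_le hfae
  have hKLP : ∀ k, klDiv Q (P k) = klDiv Q ν - ∫ ω, Real.log (f k ω).toReal ∂Q := fun k =>
    hPf k ▸ klDiv_withDensity_right Q ν hQν (hf k).aemeasurable
      (hfae.mono fun _ h => (h k).1) (hfae.mono fun _ h => (h k).2) hKLfin (hlogf k)
  have hlogg_int : Integrable (fun ω => Real.log (g ω).toReal) Q :=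
    integrable_log_toReal_prod_rpow_div π hfae_Q hZpos.ne' hZfin.ne hlogf
  have hKLG : klDiv Q G = klDiv Q ν - ∫ ω, Real.log (g ω).toReal ∂Q :=
    hG ▸ klDiv_withDensity_right Q ν hQν hg.aemeasurable
      (hgae.mono fun _ h => h.1) (hgae.mono fun _ h => h.2) hKLfin hlogg_int
  have hkey : ∑ k, π k * klDiv Q (P k) = klDiv Q G - Real.log Z.toReal := by
    rw [hKLG, integral_log_toReal_prod_rpow_div π hfae_Q hZpos.ne' hZfin.ne hlogf]
    simp_rw [hKLP, mul_sub, Finset.sum_sub_distrib, ← Finset.sum_mul, hπsum]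
    ring
  have hQG : Q ≪ G :=
    hQν.trans (hG ▸ withDensity_absolutelyContinuous' hg.aemeasurable (hgae.mono fun _ h => h.1))
  have hintG : Integrable (llr Q G) Q := hG ▸ integrable_llr_withDensity_right Q ν hQν
    hg.aemeasurable (hgae.mono fun _ h => h.1) (hgae.mono fun _ h => h.2) hKLfin hlogg_int
  have hKLG_nonneg := klDiv_nonneg hQG
  rw [hkey, ← klDiv_eq_zero_iff hQG hintG]
  exact ⟨by linarith, ⟨fun h => by linarith, fun h => by linarith⟩⟩

theorem stmt2 {Ω : Type*} [MeasurableSpace Ω] (ν : Measure Ω) [SigmaFinite ν]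
    (K : ℕ) (P : Fin K → Measure Ω) [∀ k, IsProbabilityMeasure (P k)]
    (f : Fin K → Ω → ℝ≥0∞) (hf : ∀ k, Measurable (f k))
    (hPf : ∀ k, P k = ν.withDensity (f k))
    (hequiv : ∀ k, P k ≪ ν ∧ ν ≪ P k)
    (π : Fin K → ℝ) (hπ : ∀ k, π k ∈ Set.Icc (0 : ℝ) 1) (hπsum : ∑ k, π k = 1)
    (Z : ℝ≥0∞) (hZ : Z = ∫⁻ ω, ∏ k, f k ω ^ π k ∂ν)
    (hZpos : 0 < Z) (hZfin : Z < ⊤)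
    (G : Measure Ω) [IsProbabilityMeasure G]
    (hG : G = ν.withDensity fun ω => (∏ k, f k ω ^ π k) / Z)
    (Q : Measure Ω) [IsProbabilityMeasure Q] (hQν : Q ≪ ν)
    (hKLfin : Integrable (fun ω => Real.log ((Q.rnDeriv ν) ω).toReal) Q)
    (hlogf : ∀ k, Integrable (fun ω => Real.log (f k ω).toReal) Q) :
    -Real.log Z.toReal ≤ ∑ k, π k * klDiv Q (P k) ∧
      (∑ k, π k * klDiv Q (P k) = -Real.log Z.toReal ↔ Q = G) :=
  stmt2_general ν K P f hf hPf hequiv π hπsum Z hZpos hZfin G hG Q hQν hKLfin hlogf
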